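/- Let α : [0,∞) → [0,∞) be differentiable with α(0) = 0, and suppose that for constants λ > 0, C > 0, N ≥ 1 it satisfies α'(t) ≤ −2λ α(t) + (C/√N) α(t)^{1/2} + C/N for all t ≥ 0. Then for every δ ∈ (0, λ) there is a constant C' > 0, depending only on C and δ (but not on N or t), such that α(t) ≤ C'/N for all t ≥ 0. -/

import Mathlib

/-!
Barrier argument: the level `K / N` with `K = (C / δ + 1) ^ 2` cannot be crossed from below.
At `α = K / N` the right-hand side of the differential inequality equals
`(C √K + C - 2λK) / N`, and the choice of `K` gives `C √K < δ K` and `C < δ K`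
(this is the Young-inequality absorption of the square-root term), so `C √K + C < 2δK ≤ 2λK`
and `α` is strictly decreasing whenever it touches the level.
-/

open Real Set

theorem le_of_hasDerivAt_neg_at_level {f f' : ℝ → ℝ} {a B : ℝ}
    (hf : ∀ t, a ≤ t → HasDerivAt f (f' t) t) (ha : f a ≤ B)
    (hB : ∀ t, a ≤ t → f t = B → f' t < 0) : ∀ t, a ≤ t → f t ≤ B := by
  intro t hat
  refine image_le_of_deriv_right_lt_deriv_boundary' (B := fun _ => B) (B' := fun _ => 0)
    (fun x hx => (hf x hx.1).continuousAt.continuousWithinAt)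
    (fun x hx => (hf x hx.1).hasDerivWithinAt) ha continuousOn_const
    (fun x _ => hasDerivWithinAt_const _ _ _) (fun x hx => hB x hx.1) ⟨hat, le_rfl⟩

noncomputable def barrierLevel (C δ : ℝ) : ℝ := (C / δ + 1) ^ 2

theorem barrierLevel_pos {C δ : ℝ} (hC : 0 ≤ C) (hδ : 0 < δ) : 0 < barrierLevel C δ := by
  unfold barrierLevel; positivity

theorem add_mul_sqrt_barrierLevel_lt {lam C δ : ℝ} (hC : 0 ≤ C) (hδ : 0 < δ) (hδlam : δ ≤ lam) :
    C * √(barrierLevel C δ) + C < 2 * lam * barrierLevel C δ := by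
  set s := C / δ + 1 with hs
  have hs1 : 1 ≤ s := by rw [hs]; have := div_nonneg hC hδ.le; linarith
  have hCs : C = δ * (s - 1) := by rw [hs]; field_simp; ring
  rw [barrierLevel, ← hs, sqrt_sq (by linarith), hCs]
  nlinarith [mul_le_mul_of_nonneg_right hδlam (sq_nonneg s)]

theorem rhs_at_div_eq {lam C K N : ℝ} (hK : 0 ≤ K) (hN : 0 < N) :
    -2 * lam * (K / N) + (C / √N) * √(K / N) + C / N = (C * √K + C - 2 * lam * K) / N := by
  have hsqrtN : √N * √N = N := mul_self_sqrt hN.le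
  rw [sqrt_div hK, div_mul_div_comm, mul_comm (√N), hsqrtN]
  ring

theorem stmt_2_general (lam C δ : ℝ) (hC : 0 < C) (hδ : 0 < δ) (hδlam : δ < lam) :
    ∃ C' > 0, ∀ (N : ℝ), 1 ≤ N → ∀ α α' : ℝ → ℝ,
      α 0 = 0 → (∀ t, 0 ≤ t → 0 ≤ α t) →
      (∀ t, 0 ≤ t → HasDerivAt α (α' t) t) →
      (∀ t, 0 ≤ t →
        α' t ≤ -2 * lam * α t + (C / Real.sqrt N) * Real.sqrt (α t) + C / N) →
      ∀ t, 0 ≤ t → α t ≤ C' / N := by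
  have hK := barrierLevel_pos hC.le hδ
  refine ⟨barrierLevel C δ, hK, fun N hN α α' hα0 _ hderiv hode => ?_⟩
  have hNpos : 0 < N := one_pos.trans_le hN
  refine le_of_hasDerivAt_neg_at_level hderiv (by rw [hα0]; positivity) fun t ht hαt => ?_
  calc α' t ≤ _ := hode t ht
    _ = (C * √(barrierLevel C δ) + C - 2 * lam * barrierLevel C δ) / N := by
      rw [hαt, rhs_at_div_eq hK.le hNpos]
    _ < 0 := div_neg_of_neg_of_pos
      (by linarith [add_mul_sqrt_barrierLevel_lt hC.le hδ hδlam.le]) hNpos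

/-- Uniform-in-time Gronwall estimate: if `α(0)=0`, `α ≥ 0` and
`α' ≤ -2λα + (C/√N)√α + C/N` on `[0,∞)`, then for every `δ ∈ (0,λ)` there is a
constant `C'` depending only on `C` and `δ` (not on `N` or `t`) with `α(t) ≤ C'/N`. -/
theorem stmt_2 (lam C δ : ℝ) (hlam : 0 < lam) (hC : 0 < C) (hδ : 0 < δ) (hδlam : δ < lam) :
    ∃ C' > 0, ∀ (N : ℝ), 1 ≤ N → ∀ α α' : ℝ → ℝ,
      α 0 = 0 → (∀ t, 0 ≤ t → 0 ≤ α t) →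
      (∀ t, 0 ≤ t → HasDerivAt α (α' t) t) →
      (∀ t, 0 ≤ t →
        α' t ≤ -2 * lam * α t + (C / Real.sqrt N) * Real.sqrt (α t) + C / N) →
      ∀ t, 0 ≤ t → α t ≤ C' / N :=
  stmt_2_general lam C δ hC hδ hδlam
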